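/- Let (A, φ) be a noncommutative probability space, Φ̃ : H_S(A) → ℂ the character extending φ, and β̃ the infinitesimal character on H_S(A) satisfying the fixed-point equation Φ̃ = ε_A + Φ̃ ≻̃ β̃. Then for every n ≥ 1, t ∈ ST(n) and a_1,…,a_n ∈ A: β̃(t ⊗ a_1⋯a_n) = (−1)^{i(t)−1} φ_{π(t)}(a_1,…,a_n) if t ∈ BST(n), and β̃(t ⊗ a_1⋯a_n) = 0 otherwise. -/

import Mathlib

open scoped BigOperators

/-- Planar rooted trees (rose trees). -/
inductive PTree : Type
  | node : List PTree → PTree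

namespace PTree

/-- The single-vertex tree (a leaf). -/
abbrev leaf : PTree := .node []

/-- Subtree at a given path from the root (entries select children). -/
def subtreeAt : List ℕ → PTree → Option PTree
  | [], t => some t
  | i :: p, node cs => (cs[i]?).bind (subtreeAt p)

/-- `p` is (the path of) a vertex of `t`. -/
def IsVertex (t : PTree) (p : List ℕ) : Prop := (subtreeAt p t).isSome

/-- `p` is a leaf of `t`. -/
def IsLeafAt (t : PTree) (p : List ℕ) : Prop := subtreeAt p t = some leaf

/-- `p` is an internal (non-leaf) vertex of `t`. -/
def IsInternalAt (t : PTree) (p : List ℕ) : Prop :=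
  ∃ cs, subtreeAt p t = some (node cs) ∧ cs ≠ []

/-- Schröder trees: every internal vertex has at least two children. -/
inductive IsSchroder : PTree → Prop
  | leaf : IsSchroder (node [])
  | node (cs : List PTree) : 2 ≤ cs.length → (∀ c ∈ cs, IsSchroder c) → IsSchroder (node cs)

/-- Number of leaves of a tree. -/
noncomputable def numLeaves (t : PTree) : ℕ := Nat.card {p : List ℕ // IsLeafAt t p}

/-- Number of sectors between consecutive leaves. -/
noncomputable def numSectors (t : PTree) : ℕ := numLeaves t - 1

/-- Number of internal vertices. -/
noncomputable def numInternal (t : PTree) : ℕ := Nat.card {p : List ℕ // IsInternalAt t p}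

/-- The set of Schröder trees with `n+1` leaves. -/
def ST (n : ℕ) : Set PTree := {t | IsSchroder t ∧ numLeaves t = n + 1}

/-- Number of surjective strictly order-preserving maps from the poset of internal
vertices of `t` (i.e. the vertex poset of the skeleton `sk(t)`, with the root minimal,
the order being the ancestor/prefix order) onto `{1, …, k}`. This is `ω_k(sk(t))`. -/
noncomputable def omegaSkK (t : PTree) (k : ℕ) : ℕ :=
  Nat.card {f : {p : List ℕ // IsInternalAt t p} → Fin k //
    Function.Surjective f ∧ ∀ v w, v.1 <+: w.1 → v ≠ w → f v < f w}

/-- The Murua coefficient `ω(sk(t))` of the skeleton of `t`. -/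
noncomputable def omegaSk (t : PTree) : ℂ :=
  ∑ k ∈ Finset.Icc 1 (numInternal t), ((-1 : ℂ) ^ (k + 1) / (k : ℂ)) * (omegaSkK t k : ℂ)

/-- The subtree of `t` at path `p` (junk value: a leaf). -/
noncomputable def subtree! (t : PTree) (p : List ℕ) : PTree := (subtreeAt p t).getD leaf

/-- Number of leaves of `t` strictly to the left of the subtree at `p`. -/
noncomputable def leavesBefore (t : PTree) (p : List ℕ) : ℕ :=
  Nat.card {q : List ℕ // IsLeafAt t q ∧ List.Lex (· < ·) q p ∧ ¬ p <+: q}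

/-- Sector number `i` (0-indexed: the sector between the `(i+1)`-st and `(i+2)`-nd leaves of `t`)
lies strictly inside the subtree of `t` rooted at `p`. -/
def SectorIn (t : PTree) (p : List ℕ) (i : ℕ) : Prop :=
  leavesBefore t p ≤ i ∧ i + 2 ≤ leavesBefore t p + numLeaves (subtree! t p)

/-- The internal vertex `v` of `t` owns sector `i`: the sector lies in the corolla at `v`,
i.e. inside the subtree at `v` but not inside the subtree at any strictly deeper vertex. -/
def OwnsSector (t : PTree) (v : List ℕ) (i : ℕ) : Prop :=
  IsInternalAt t v ∧ SectorIn t v i ∧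
    ∀ w, IsInternalAt t w → v <+: w → w ≠ v → ¬ SectorIn t w i

/-- Sectors `i` and `j` belong to the same block of the noncrossing partition `π(t)`. -/
def SameOwner (t : PTree) (i j : ℕ) : Prop := ∃ v, OwnsSector t v i ∧ OwnsSector t v j

open Classical in
/-- `φ_{π(t)}(a_1,…,a_n)`: the product over the blocks of the noncrossing partition `π(t)`
(one block per internal vertex `v`, consisting of the sectors owned by `v`) of `φ` applied to
the ordered product of the corresponding letters of `w`. -/
noncomputable def phiPi {A : Type*} [Ring A] (φ : A → ℂ) (t : PTree) (w : List A) : ℂ :=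
  ∏ᶠ v ∈ {v : List ℕ | IsInternalAt t v},
    φ ((((List.range w.length).filter fun i => OwnsSector t v i).map fun i => w.getD i 0).prod)

/-- A corolla: a root whose (at least two) children are all leaves. -/
def corolla (m : ℕ) : PTree := node (List.replicate m leaf)

/-- `t` is a corolla. -/
def IsCorolla (t : PTree) : Prop := ∃ m, 2 ≤ m ∧ t = corolla m

/-- Graft a tree `s` onto the leftmost leaf of `t`. -/
def graftLeftmost : PTree → PTree → PTree
  | node [], s => s
  | node (c :: cs), s => node (graftLeftmost c s :: cs)

/-- Trees obtained from the single-vertex tree by repeatedly grafting a corolla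
onto the leftmost leaf. -/
inductive IsBST : PTree → Prop
  | single : IsBST leaf
  | graft (t : PTree) (m : ℕ) : IsBST t → 2 ≤ m → IsBST (graftLeftmost t (corolla m))

/-- Schröder trees whose leftmost child of the root is a leaf. -/
def IsPST (t : PTree) : Prop := ∃ cs, t = node (leaf :: cs)

end PTree
namespace PTree

mutual
  /-- List of all vertex paths of a tree. -/
  def verticesList : PTree → List (List ℕ)
    | .node cs => [] :: verticesListAux 0 cs
  def verticesListAux : ℕ → List PTree → List (List ℕ)
    | _, [] => []
    | i, c :: cs => (verticesList c).map (i :: ·) ++ verticesListAux (i + 1) cs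
end

open Classical in
/-- The `Finset` of internal vertices of `t`. -/
noncomputable def internalFinset (t : PTree) : Finset (List ℕ) :=
  ((verticesList t).filter fun p => decide (IsInternalAt t p)).toFinset

open Classical in
/-- The admissible cuts of a Schröder tree `t`: sets of internal vertices such that every
path from the root to a leaf contains at most one of them (equivalently, antichains for
the ancestor/prefix order). -/
noncomputable def cutsFinset (t : PTree) : Finset (Finset (List ℕ)) :=
  (internalFinset t).powerset.filter fun c => ∀ v ∈ c, ∀ w ∈ c, v ≠ w → ¬ v <+: w

/-- A vertex path lies on the leftmost branch iff it consists of zeros. -/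
def OnLeftBranch (v : List ℕ) : Prop := v = List.replicate v.length 0

open Classical in
/-- `Adm_≺(t)`: admissible cuts whose trunk contains the leftmost leaf of `t`,
i.e. cuts containing no vertex of the leftmost branch. -/
noncomputable def cutsPrecFinset (t : PTree) : Finset (Finset (List ℕ)) :=
  (cutsFinset t).filter fun c => ∀ v ∈ c, ¬ OnLeftBranch v

open Classical in
/-- `Adm(t) \ Adm_≺(t)`: the admissible cuts containing a vertex of the leftmost branch. -/
noncomputable def cutsSuccFinset (t : PTree) : Finset (Finset (List ℕ)) :=
  (cutsFinset t).filter fun c => ∃ v ∈ c, OnLeftBranch v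

/-- Replace the subtree at a given path by a leaf. -/
def replaceLeaf : List ℕ → PTree → PTree
  | [], _ => leaf
  | i :: p, node cs => node (cs.set i (replaceLeaf p (cs.getD i leaf)))

/-- The vertices of a cut, sorted from left to right. -/
noncomputable def sortCut (t : PTree) (c : Finset (List ℕ)) : List (List ℕ) :=
  c.toList.mergeSort fun v w => Nat.ble (leavesBefore t v) (leavesBefore t w)

/-- The trunk `R_c(t)`: replace the subtree at each vertex of the cut by a leaf. -/
noncomputable def trunkTree (t : PTree) (c : Finset (List ℕ)) : PTree :=
  (sortCut t c).foldl (fun s v => replaceLeaf v s) t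

open Classical in
/-- Sector `i` of `t` is removed by the cut `c` (it lies in one of the pruned subtrees). -/
noncomputable def RemovedIdx (t : PTree) (c : Finset (List ℕ)) (i : ℕ) : Prop :=
  ∃ v ∈ c, leavesBefore t v ≤ i ∧ i < leavesBefore t v + numSectors (subtree! t v)

/-- A decorated forest: a list of Schröder trees, each `t` decorated by a word of length
`numSectors t` labelling the sectors between consecutive leaves from left to right. -/
abbrev DForest (A : Type*) := List (PTree × List A)

/-- A genuine decorated tree: a non-unit Schröder tree with matching decoration. -/
def GoodTree {A : Type*} (d : PTree × List A) : Prop :=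
  IsSchroder d.1 ∧ d.1 ≠ leaf ∧ d.2.length = numSectors d.1

/-- A genuine decorated forest. -/
def GoodForest {A : Type*} (F : DForest A) : Prop := ∀ d ∈ F, GoodTree d

open Classical in
/-- The decoration of the trunk `R_c(t ⊗ w)`: the letters of `w` at the sectors
not removed by the cut, in their original order. -/
noncomputable def trunkWord {A : Type*} [Zero A] (t : PTree) (c : Finset (List ℕ))
    (w : List A) : List A :=
  (((List.range w.length).filter fun i => decide (¬ RemovedIdx t c i)).map fun i => w.getD i 0)

open Classical in
/-- The trunk `R_c(t ⊗ w)` as a decorated forest (empty if the trunk is the unit,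
i.e. the single-leaf tree, which is identified with `1`). -/
noncomputable def trunkPart {A : Type*} [Zero A] (d : PTree × List A)
    (c : Finset (List ℕ)) : DForest A :=
  if trunkTree d.1 c = leaf then [] else [(trunkTree d.1 c, trunkWord d.1 c d.2)]

/-- The pruning `P_c(t ⊗ w)`: the ordered forest of decorated subtrees rooted at the
vertices of the cut (left to right), each carrying the contiguous subword of `w`
decorating its sectors. -/
noncomputable def prunePart {A : Type*} (d : PTree × List A)
    (c : Finset (List ℕ)) : DForest A :=
  (sortCut d.1 c).map fun v =>
    (subtree! d.1 v, (d.2.drop (leavesBefore d.1 v)).take (numSectors (subtree! d.1 v)))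

/-- All splittings `R_c(F) ⊗ P_c(F)` of a decorated forest given by tuples of admissible
cuts (one cut per tree): the combinatorial coproduct `δ_A`. -/
noncomputable def forestSplits {A : Type*} [Zero A] :
    DForest A → List (DForest A × DForest A)
  | [] => [([], [])]
  | d :: ds => (cutsFinset d.1).toList.flatMap fun c =>
      (forestSplits ds).map fun pr => (trunkPart d c ++ pr.1, prunePart d c ++ pr.2)

/-- The splittings appearing in `δ_{≺,A}`: the first tree is cut along `Adm_≺`, the
remaining ones along all admissible cuts. -/
noncomputable def forestSplitsPrec {A : Type*} [Zero A] :
    DForest A → List (DForest A × DForest A)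
  | [] => []
  | d :: ds => (cutsPrecFinset d.1).toList.flatMap fun c =>
      (forestSplits ds).map fun pr => (trunkPart d c ++ pr.1, prunePart d c ++ pr.2)

/-- The splittings appearing in `δ_{≻,A} = δ_A − δ_{≺,A}`. -/
noncomputable def forestSplitsSucc {A : Type*} [Zero A] :
    DForest A → List (DForest A × DForest A)
  | [] => []
  | d :: ds => (cutsSuccFinset d.1).toList.flatMap fun c =>
      (forestSplits ds).map fun pr => (trunkPart d c ++ pr.1, prunePart d c ++ pr.2)

/-- The convolution product `f * g = m_ℂ ∘ (f ⊗ g) ∘ δ_A` of linear functionals on the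
Hopf algebra `H_S(A)` of decorated Schröder trees (described on the basis of decorated
forests). -/
noncomputable def convD {A : Type*} [Zero A] (f g : DForest A → ℂ) : DForest A → ℂ :=
  fun F => ((forestSplits F).map fun pr => f pr.1 * g pr.2).sum

/-- The left half-shuffle product `f ≺̃ g = m_ℂ ∘ (f ⊗ g) ∘ δ_{≺,A}`. -/
noncomputable def precD {A : Type*} [Zero A] (f g : DForest A → ℂ) : DForest A → ℂ :=
  fun F => ((forestSplitsPrec F).map fun pr => f pr.1 * g pr.2).sum

/-- The right half-shuffle product `f ≻̃ g = m_ℂ ∘ (f ⊗ g) ∘ δ_{≻,A}`. -/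
noncomputable def succD {A : Type*} [Zero A] (f g : DForest A → ℂ) : DForest A → ℂ :=
  fun F => ((forestSplitsSucc F).map fun pr => f pr.1 * g pr.2).sum

open Classical in
/-- The counit `ε_A` of `H_S(A)` as a functional. -/
noncomputable def epsD {A : Type*} : DForest A → ℂ := fun F => if F = [] then 1 else 0

open Classical in
/-- The character `Φ̃ : H_S(A) → ℂ` extending `φ`: it sends a decorated tree `t ⊗ w` to
`φ(a_1 ⋯ a_n)` if `t` is a corolla and to `0` otherwise, multiplicatively on forests. -/
noncomputable def charD {A : Type*} [Ring A] (φ : A → ℂ) : DForest A → ℂ :=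
  fun F => (F.map fun d => if IsCorolla d.1 then φ d.2.prod else 0).prod

/-- `Φ̂ = Φ̃ − ε_A`. -/
noncomputable def charHatD {A : Type*} [Ring A] (φ : A → ℂ) : DForest A → ℂ :=
  fun F => charD φ F - epsD F

/-- Convolution powers `f^{*k}` (with `f^{*0} = ε_A`). -/
noncomputable def convPowD {A : Type*} [Zero A] (f : DForest A → ℂ) : ℕ → DForest A → ℂ
  | 0 => epsD
  | k + 1 => convD f (convPowD f k)

/-- Left half-shuffle powers `α^{≺̃ k}`, with `α^{≺̃ 0} = ε_A` and
`α^{≺̃ k} = α ≺̃ α^{≺̃ (k−1)}`. -/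
noncomputable def precPowD {A : Type*} [Zero A] (α : DForest A → ℂ) : ℕ → DForest A → ℂ
  | 0 => epsD
  | k + 1 => precD α (precPowD α k)

/-- Right half-shuffle powers `α^{≻̃ k}`, with `α^{≻̃ 0} = ε_A` and
`α^{≻̃ k} = α^{≻̃ (k−1)} ≻̃ α`. -/
noncomputable def succPowD {A : Type*} [Zero A] (α : DForest A → ℂ) : ℕ → DForest A → ℂ
  | 0 => epsD
  | k + 1 => succD (succPowD α k) α

/-- The left half-shuffle exponential `E_≺̃(α) = Σ_{k ≥ 0} α^{≺̃ k}`. -/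
noncomputable def ePrecD {A : Type*} [Zero A] (α : DForest A → ℂ) : DForest A → ℂ :=
  fun F => ∑ᶠ k : ℕ, precPowD α k F

/-- The right half-shuffle exponential `E_≻̃(α) = Σ_{k ≥ 0} α^{≻̃ k}`. -/
noncomputable def eSuccD {A : Type*} [Zero A] (α : DForest A → ℂ) : DForest A → ℂ :=
  fun F => ∑ᶠ k : ℕ, succPowD α k F

/-- The convolution exponential `exp^*(α) = Σ_{k ≥ 0} α^{*k} / k!`. -/
noncomputable def expStarD {A : Type*} [Zero A] (α : DForest A → ℂ) : DForest A → ℂ :=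
  fun F => ∑ᶠ k : ℕ, ((k.factorial : ℂ))⁻¹ * convPowD α k F

/-- The convolution logarithm `log^*(Φ̃) = Σ_{k ≥ 1} ((−1)^{k+1}/k) (Φ̃ − ε_A)^{*k}`. -/
noncomputable def logStarD {A : Type*} [Ring A] (φ : A → ℂ) : DForest A → ℂ :=
  fun F => ∑ᶠ k ∈ Set.Ici (1 : ℕ), ((-1 : ℂ) ^ (k + 1) / (k : ℂ)) * convPowD (charHatD φ) k F

/-- An infinitesimal character of `H_S(A)`: it vanishes on the unit (empty forest) and on
products of two or more nonempty forests. -/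
def IsInfCharD {A : Type*} (α : DForest A → ℂ) : Prop :=
  α [] = 0 ∧ ∀ F G : DForest A, F ≠ [] → G ≠ [] → α (F ++ G) = 0

end PTree

section Part1
namespace PTree

theorem strongRec {motive : PTree → Prop}
    (h : ∀ cs, (∀ c ∈ cs, motive c) → motive (node cs)) : ∀ t, motive t
  | node cs => h cs (fun c hc => strongRec h c)
termination_by t => sizeOf t
decreasing_by
  have := List.sizeOf_lt_of_mem hc
  simp only [node.sizeOf_spec]; omega

@[simp] lemma subtreeAt_nil' (t : PTree) : subtreeAt [] t = some t := rfl
@[simp] lemma subtreeAt_cons' (i : ℕ) (p : List ℕ) (cs : List PTree) :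
    subtreeAt (i :: p) (node cs) = (cs[i]?).bind (subtreeAt p) := rfl

lemma isLeafAt_leaf_iff {q : List ℕ} : IsLeafAt leaf q ↔ q = [] := by
  cases q with
  | nil => simp [IsLeafAt]
  | cons i p => simp [IsLeafAt]

lemma isLeafAt_node_nil_iff {cs : List PTree} : IsLeafAt (node cs) [] ↔ cs = [] := by
  simp [IsLeafAt, leaf]

lemma isLeafAt_cons_iff {cs : List PTree} {i : ℕ} {p : List ℕ} :
    IsLeafAt (node cs) (i :: p) ↔ ∃ c, cs[i]? = some c ∧ IsLeafAt c p := by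
  simp [IsLeafAt, Option.bind_eq_some_iff]

lemma isInternalAt_cons_iff {cs : List PTree} {i : ℕ} {p : List ℕ} :
    IsInternalAt (node cs) (i :: p) ↔ ∃ c, cs[i]? = some c ∧ IsInternalAt c p := by
  constructor
  · rintro ⟨ds, h, hne⟩
    rw [subtreeAt_cons', Option.bind_eq_some_iff] at h
    obtain ⟨c, hc, h2⟩ := h
    exact ⟨c, hc, ds, h2, hne⟩
  · rintro ⟨c, hc, ds, h, hne⟩
    exact ⟨ds, by rw [subtreeAt_cons', hc, Option.bind_some]; exact h, hne⟩

lemma isInternalAt_nil_iff {t : PTree} : IsInternalAt t [] ↔ ∃ cs, t = node cs ∧ cs ≠ [] := by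
  cases t with
  | node cs =>
    constructor
    · rintro ⟨ds, h, hne⟩
      simp only [subtreeAt_nil', Option.some_inj] at h
      exact ⟨ds, h, hne⟩
    · rintro ⟨ds, h, hne⟩
      exact ⟨ds, by rw [h]; rfl, hne⟩

lemma not_isInternalAt_leaf (p : List ℕ) : ¬ IsInternalAt leaf p := by
  cases p with
  | nil => rintro ⟨cs, h, hne⟩; simp only [subtreeAt_nil', Option.some_inj, leaf] at h
           exact hne (by injection h.symm)
  | cons i q => rintro ⟨cs, h, hne⟩; simp [leaf] at h

lemma IsInternalAt.isVertex {t : PTree} {p : List ℕ} (h : IsInternalAt t p) : IsVertex t p := by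
  obtain ⟨cs, h, _⟩ := h; simp [IsVertex, h]

lemma IsLeafAt.isVertex {t : PTree} {p : List ℕ} (h : IsLeafAt t p) : IsVertex t p := by
  simp [IsVertex, IsLeafAt] at *; simp [h]

lemma nil_mem_verticesList (t : PTree) : [] ∈ verticesList t := by
  cases t with | node cs => simp [verticesList]

lemma mem_verticesListAux {cs : List PTree} {i : ℕ} {p : List ℕ} :
    p ∈ verticesListAux i cs ↔
      ∃ j c q, cs[j]? = some c ∧ p = (i + j) :: q ∧ q ∈ verticesList c := by
  induction cs generalizing i with
  | nil => simp [verticesListAux]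
  | cons c cs ih =>
    simp only [verticesListAux, List.mem_append, List.mem_map, ih]
    constructor
    · rintro (⟨q, hq, rfl⟩ | ⟨j, c', q, h1, rfl, h2⟩)
      · exact ⟨0, c, q, by simp, by simp, hq⟩
      · exact ⟨j + 1, c', q, by simpa using h1,
          by rw [show i + (j + 1) = (i + 1) + j by omega], h2⟩
    · rintro ⟨j, c', q, h1, hp, h2⟩
      cases j with
      | zero =>
        simp only [List.getElem?_cons_zero, Option.some_inj] at h1
        subst h1
        exact Or.inl ⟨q, h2, by simpa using hp.symm⟩
      | succ j =>
        refine Or.inr ⟨j, c', q, by simpa using h1, ?_, h2⟩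
        rw [hp, show i + (j + 1) = (i + 1) + j by omega]

lemma cons_mem_verticesList_iff {cs : List PTree} {j : ℕ} {q : List ℕ} :
    (j :: q) ∈ verticesList (node cs) ↔ ∃ c, cs[j]? = some c ∧ q ∈ verticesList c := by
  simp only [verticesList, List.mem_cons, reduceCtorEq, false_or, mem_verticesListAux]
  constructor
  · rintro ⟨j', c, q', h1, h2, h3⟩
    rw [List.cons.injEq] at h2
    obtain ⟨rfl, rfl⟩ := h2
    exact ⟨c, by simpa using h1, h3⟩
  · rintro ⟨c, h1, h2⟩
    exact ⟨j, c, q, h1, by simp, h2⟩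

lemma mem_verticesList_of_isVertex : ∀ {p : List ℕ} {t : PTree}, IsVertex t p → p ∈ verticesList t := by
  intro p
  induction p with
  | nil => exact fun _ => nil_mem_verticesList _
  | cons j q ih =>
    intro t hv
    cases t with
    | node cs =>
      rw [IsVertex, subtreeAt_cons'] at hv
      cases h : cs[j]? with
      | none => rw [h] at hv; simp at hv
      | some c =>
        rw [h, Option.bind_some] at hv
        exact cons_mem_verticesList_iff.2 ⟨c, h, ih hv⟩

lemma finite_setOf_isVertex (t : PTree) : {p | IsVertex t p}.Finite :=
  (List.finite_toSet (verticesList t)).subset fun _ hp => mem_verticesList_of_isVertex hp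

lemma finite_setOf_isLeafAt (t : PTree) : {p | IsLeafAt t p}.Finite :=
  (finite_setOf_isVertex t).subset fun _ hp => hp.isVertex

lemma finite_setOf_isInternalAt (t : PTree) : {p | IsInternalAt t p}.Finite :=
  (finite_setOf_isVertex t).subset fun _ hp => hp.isVertex

lemma natCard_setOf (P : List ℕ → Prop) : Nat.card {q // P q} = {q | P q}.ncard :=
  Nat.card_coe_set_eq {q | P q}

lemma ncard_consFamily (S : ℕ → Set (List ℕ)) (N : ℕ)
    (h0 : ∀ i, N ≤ i → S i = ∅) (hfin : ∀ i, (S i).Finite) :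
    {q : List ℕ | ∃ i p, q = i :: p ∧ p ∈ S i}.ncard
      = ∑ i ∈ Finset.range N, (S i).ncard := by
  classical
  haveI h1 : ∀ i : Fin N, Fintype (S i.1) := fun i => (hfin i.1).fintype
  have hlt : ∀ x : {q : List ℕ | ∃ i p, q = i :: p ∧ p ∈ S i}, x.1.headI < N := by
    rintro ⟨q, i, p, rfl, hp⟩
    simp only [List.headI]
    by_contra h
    rw [h0 i (by omega)] at hp
    exact hp
  have hmem : ∀ x : {q : List ℕ | ∃ i p, q = i :: p ∧ p ∈ S i}, x.1.tail ∈ S x.1.headI := by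
    rintro ⟨q, i, p, rfl, hp⟩
    simpa using hp
  let e : {q : List ℕ | ∃ i p, q = i :: p ∧ p ∈ S i} ≃ Σ i : Fin N, S i.1 :=
    { toFun := fun x => ⟨⟨x.1.headI, hlt x⟩, ⟨x.1.tail, hmem x⟩⟩
      invFun := fun y => ⟨(y.1 : ℕ) :: y.2.1, ⟨y.1, y.2.1, rfl, y.2.2⟩⟩
      left_inv := by rintro ⟨q, i, p, rfl, hp⟩; rfl
      right_inv := by rintro ⟨⟨i, hi⟩, ⟨p, hp⟩⟩; rfl }
  haveI : Fintype {q : List ℕ | ∃ i p, q = i :: p ∧ p ∈ S i} := Fintype.ofEquiv _ e.symm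
  rw [← Nat.card_coe_set_eq, Nat.card_congr e, Nat.card_eq_fintype_card,
    Fintype.card_sigma]
  rw [← Fin.sum_univ_eq_sum_range fun i => (S i).ncard]
  refine Finset.sum_congr rfl fun i _ => ?_
  rw [← Nat.card_coe_set_eq, Nat.card_eq_fintype_card]

lemma numLeaves_eq_ncard (t : PTree) : numLeaves t = {q | IsLeafAt t q}.ncard :=
  natCard_setOf _

lemma numLeaves_leaf : numLeaves leaf = 1 := by
  rw [numLeaves_eq_ncard]
  have : {q | IsLeafAt leaf q} = {([] : List ℕ)} := by
    ext q; simp [isLeafAt_leaf_iff]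
  rw [this, Set.ncard_singleton]

lemma finite_optLeafSet (cs : List PTree) (i : ℕ) :
    {x : List ℕ | ∃ c, cs[i]? = some c ∧ IsLeafAt c x}.Finite := by
  cases h : cs[i]? with
  | none => convert Set.finite_empty; ext x; simp [h]
  | some c =>
    refine (finite_setOf_isLeafAt c).subset fun x hx => ?_
    obtain ⟨c', hc', hl⟩ := hx
    obtain rfl : c = c' := by injection hc'
    exact hl

lemma numLeaves_node {cs : List PTree} (h : cs ≠ []) :
    numLeaves (node cs) = ∑ i ∈ Finset.range cs.length, numLeaves (cs.getD i leaf) := by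
  rw [numLeaves_eq_ncard]
  have hset : {q | IsLeafAt (node cs) q} =
      {q : List ℕ | ∃ i p, q = i :: p ∧ p ∈ {x | ∃ c, cs[i]? = some c ∧ IsLeafAt c x}} := by
    ext q
    cases q with
    | nil => simp [isLeafAt_node_nil_iff, h]
    | cons i p =>
      simp only [Set.mem_setOf_eq, isLeafAt_cons_iff, List.cons.injEq]
      constructor
      · rintro ⟨c, hc, hl⟩; exact ⟨i, p, ⟨rfl, rfl⟩, c, hc, hl⟩
      · rintro ⟨i', p', ⟨rfl, rfl⟩, c, hc, hl⟩; exact ⟨c, hc, hl⟩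
  rw [hset, ncard_consFamily _ cs.length
    (fun i hi => by ext x; simp [List.getElem?_eq_none hi])
    (finite_optLeafSet cs)]
  refine Finset.sum_congr rfl fun i hi => ?_
  rw [Finset.mem_range] at hi
  have : {x : List ℕ | ∃ c, cs[i]? = some c ∧ IsLeafAt c x} = {x | IsLeafAt (cs.getD i leaf) x} := by
    ext x
    simp [List.getElem?_eq_getElem hi, List.getD_eq_getElem cs leaf hi]
  rw [this, ← numLeaves_eq_ncard]

lemma numLeaves_pos : ∀ t : PTree, 1 ≤ numLeaves t := by
  refine strongRec fun cs ih => ?_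
  cases cs with
  | nil => rw [show node [] = leaf from rfl, numLeaves_leaf]
  | cons c cs' =>
    rw [numLeaves_node (by simp)]
    calc 1 ≤ numLeaves ((c :: cs').getD 0 leaf) := ih _ (by simp)
    _ ≤ _ := Finset.single_le_sum (f := fun i => numLeaves ((c :: cs').getD i leaf))
        (fun _ _ => Nat.zero_le _) (by simp)

lemma leavesBefore_eq_ncard (t : PTree) (p : List ℕ) :
    leavesBefore t p = {q | IsLeafAt t q ∧ List.Lex (· < ·) q p ∧ ¬ p <+: q}.ncard :=
  natCard_setOf _

lemma leavesBefore_nil (t : PTree) : leavesBefore t [] = 0 := by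
  rw [leavesBefore_eq_ncard]
  have : {q | IsLeafAt t q ∧ List.Lex (· < ·) q [] ∧ ¬ [] <+: q} = ∅ := by
    ext q; simp only [Set.mem_setOf_eq, Set.mem_empty_iff_false, iff_false, not_and]
    exact fun _ h => absurd h (by intro h'; cases h')
  rw [this, Set.ncard_empty]

lemma lex_cons_cons_iff {a b : ℕ} {l₁ l₂ : List ℕ} :
    List.Lex (· < ·) (a :: l₁) (b :: l₂) ↔ a < b ∨ (a = b ∧ List.Lex (· < ·) l₁ l₂) := by
  constructor
  · intro h
    cases h with
    | rel h => exact Or.inl h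
    | cons h => exact Or.inr ⟨rfl, h⟩
  · rintro (h | ⟨rfl, h⟩)
    · exact List.Lex.rel h
    · exact List.Lex.cons h

end PTree
end Part1
section Part2
namespace PTree

lemma finite_optBeforeSet (cs : List PTree) (i : ℕ) (P : List ℕ → Prop) :
    {x : List ℕ | (∃ c, cs[i]? = some c ∧ IsLeafAt c x) ∧ P x}.Finite := by
  exact (finite_optLeafSet cs i).subset fun x hx => hx.1

lemma leavesBefore_cons {cs : List PTree} {j : ℕ} {p : List ℕ} (hj : j < cs.length) :
    leavesBefore (node cs) (j :: p) =
      (∑ i ∈ Finset.range j, numLeaves (cs.getD i leaf)) + leavesBefore (cs.getD j leaf) p := by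
  classical
  rw [leavesBefore_eq_ncard]
  set S : ℕ → Set (List ℕ) := fun i =>
    {x : List ℕ | (∃ c, cs[i]? = some c ∧ IsLeafAt c x) ∧
      (i < j ∨ (i = j ∧ List.Lex (· < ·) x p ∧ ¬ p <+: x))} with hS
  have hset : {q | IsLeafAt (node cs) q ∧ List.Lex (· < ·) q (j :: p) ∧ ¬ (j :: p) <+: q} =
      {q : List ℕ | ∃ i x, q = i :: x ∧ x ∈ S i} := by
    ext q
    cases q with
    | nil =>
      simp only [Set.mem_setOf_eq, isLeafAt_node_nil_iff]
      constructor
      · rintro ⟨rfl, -⟩; simp at hj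
      · rintro ⟨i, x, h, -⟩; exact absurd h (by simp)
    | cons i x =>
      simp only [Set.mem_setOf_eq, isLeafAt_cons_iff, lex_cons_cons_iff, List.cons_prefix_cons,
        List.cons.injEq, hS]
      constructor
      · rintro ⟨hc, hlex, hpre⟩
        refine ⟨i, x, ⟨rfl, rfl⟩, hc, ?_⟩
        rcases hlex with h | ⟨rfl, h⟩
        · exact Or.inl h
        · exact Or.inr ⟨rfl, h, fun hp => hpre ⟨rfl, hp⟩⟩
      · rintro ⟨i', x', ⟨rfl, rfl⟩, hc, hcond⟩
        rcases hcond with h | ⟨rfl, hlex, hpre⟩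
        · exact ⟨hc, Or.inl h, fun he => absurd he.1 (by omega)⟩
        · exact ⟨hc, Or.inr ⟨rfl, hlex⟩, fun he => hpre (he.2)⟩
  have h0 : ∀ i, j + 1 ≤ i → S i = ∅ := by
    intro i hi
    ext x
    simp only [hS, Set.mem_setOf_eq, Set.mem_empty_iff_false, iff_false, not_and]
    rintro - (h | ⟨rfl, -⟩) <;> omega
  rw [hset, ncard_consFamily S (j + 1) h0 (fun i => finite_optBeforeSet cs i _)]
  rw [Finset.sum_range_succ]
  congr 1
  · refine Finset.sum_congr rfl fun i hi => ?_
    rw [Finset.mem_range] at hi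
    have hi' : i < cs.length := by omega
    have : S i = {x | IsLeafAt (cs.getD i leaf) x} := by
      ext x
      simp [hS, List.getElem?_eq_getElem hi', List.getD_eq_getElem cs leaf hi', hi]
    rw [this, ← numLeaves_eq_ncard]
  · have : S j = {x | IsLeafAt (cs.getD j leaf) x ∧ List.Lex (· < ·) x p ∧ ¬ p <+: x} := by
      ext x
      simp [hS, List.getElem?_eq_getElem hj, List.getD_eq_getElem cs leaf hj]
    rw [this, ← leavesBefore_eq_ncard]

@[simp] lemma subtree!_nil (t : PTree) : subtree! t [] = t := rfl

lemma subtree!_cons {cs : List PTree} {j : ℕ} {p : List ℕ} {c : PTree} (h : cs[j]? = some c) :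
    subtree! (node cs) (j :: p) = subtree! c p := by
  simp [subtree!, subtreeAt_cons', h]

lemma isVertex_cons_iff {cs : List PTree} {j : ℕ} {p : List ℕ} :
    IsVertex (node cs) (j :: p) ↔ ∃ c, cs[j]? = some c ∧ IsVertex c p := by
  rw [IsVertex, subtreeAt_cons']
  cases h : cs[j]? with
  | none => simp
  | some c => simp [IsVertex]

lemma leavesBefore_add_numLeaves_le :
    ∀ (p : List ℕ) (t : PTree), IsVertex t p →
      leavesBefore t p + numLeaves (subtree! t p) ≤ numLeaves t := by
  intro p
  induction p with
  | nil => intro t _; rw [leavesBefore_nil, subtree!_nil]; omega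
  | cons j q ih =>
    intro t hv
    cases t with
    | node cs =>
      obtain ⟨c, hc, hvc⟩ := isVertex_cons_iff.1 hv
      have hj : j < cs.length := by
        by_contra h
        rw [List.getElem?_eq_none (by omega)] at hc
        exact absurd hc (by simp)
      have hgd : cs.getD j leaf = c := by
        rw [List.getD_eq_getElem cs leaf hj]
        have := List.getElem?_eq_getElem hj
        rw [hc] at this; injection this.symm
      rw [leavesBefore_cons hj, hgd, subtree!_cons hc, numLeaves_node (by rintro rfl; simp at hj)]
      have h1 := ih c hvc
      have h2 : (∑ i ∈ Finset.range (j + 1), numLeaves (cs.getD i leaf)) ≤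
          ∑ i ∈ Finset.range cs.length, numLeaves (cs.getD i leaf) :=
        Finset.sum_le_sum_of_subset (Finset.range_subset_range.2 (by omega))
      rw [Finset.sum_range_succ] at h2
      rw [hgd] at h2
      omega

end PTree
end Part2
section Part3
namespace PTree

lemma numLeaves_shape {c0 : PTree} {cs : List PTree} (hcs : ∀ x ∈ cs, x = leaf) :
    numLeaves (node (c0 :: cs)) = numLeaves c0 + cs.length := by
  rw [numLeaves_node (by simp), show (c0 :: cs).length = cs.length + 1 from rfl,
    Finset.sum_range_succ']
  have h1 : ∀ i ∈ Finset.range cs.length,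
      numLeaves ((c0 :: cs).getD (i + 1) leaf) = 1 := by
    intro i hi
    rw [Finset.mem_range] at hi
    rw [List.getD_cons_succ, List.getD_eq_getElem cs leaf hi,
      hcs _ (List.getElem_mem hi), numLeaves_leaf]
  rw [Finset.sum_congr rfl h1]
  simp [add_comm]

lemma isInternalAt_shape_zero {c0 : PTree} {cs : List PTree} {p : List ℕ} :
    IsInternalAt (node (c0 :: cs)) (0 :: p) ↔ IsInternalAt c0 p := by
  rw [isInternalAt_cons_iff]
  constructor
  · rintro ⟨c, hc, h⟩
    obtain rfl : c0 = c := by simpa using hc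
    exact h
  · exact fun h => ⟨c0, by simp, h⟩

lemma isInternalAt_shape_succ {c0 : PTree} {cs : List PTree} (hcs : ∀ x ∈ cs, x = leaf)
    {j : ℕ} {p : List ℕ} : ¬ IsInternalAt (node (c0 :: cs)) ((j + 1) :: p) := by
  rw [isInternalAt_cons_iff]
  rintro ⟨c, hc, h⟩
  rw [List.getElem?_cons_succ] at hc
  have : c ∈ cs := by
    have hj : j < cs.length := by
      by_contra hj
      rw [List.getElem?_eq_none (by omega)] at hc; simp at hc
    rw [List.getElem?_eq_getElem hj] at hc
    obtain rfl : cs[j] = c := by injection hc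
    exact List.getElem_mem hj
  rw [hcs c this] at h
  exact not_isInternalAt_leaf _ h

lemma internalSet_shape {c0 : PTree} {cs : List PTree} (hcs : ∀ x ∈ cs, x = leaf)
    (hne : cs ≠ []) :
    {p | IsInternalAt (node (c0 :: cs)) p} =
      insert ([] : List ℕ) ((fun p => 0 :: p) '' {p | IsInternalAt c0 p}) := by
  ext p
  cases p with
  | nil =>
    simp only [Set.mem_setOf_eq, Set.mem_insert_iff, true_or, iff_true]
    exact isInternalAt_nil_iff.2 ⟨c0 :: cs, rfl, by simp⟩
  | cons j q =>
    rw [Set.mem_insert_iff]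
    cases j with
    | zero =>
      rw [Set.mem_setOf_eq, isInternalAt_shape_zero]
      constructor
      · exact fun h => Or.inr ⟨q, h, rfl⟩
      · rintro (h | ⟨q', h, hq⟩)
        · exact absurd h (by simp)
        · obtain rfl : q' = q := by injection hq
          exact h
    | succ j =>
      constructor
      · exact fun h => absurd h (isInternalAt_shape_succ hcs)
      · rintro (h | ⟨q', -, hq⟩)
        · exact absurd h (by simp)
        · injection hq with h1 _; omega
  
lemma numInternal_eq_ncard (t : PTree) : numInternal t = {p | IsInternalAt t p}.ncard :=
  natCard_setOf _

lemma numInternal_shape {c0 : PTree} {cs : List PTree} (hcs : ∀ x ∈ cs, x = leaf)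
    (hne : cs ≠ []) :
    numInternal (node (c0 :: cs)) = numInternal c0 + 1 := by
  rw [numInternal_eq_ncard, internalSet_shape hcs hne,
    Set.ncard_insert_of_notMem (by rintro ⟨q, -, h⟩; exact absurd h (by simp))
      (((finite_setOf_isInternalAt c0).image _)),
    Set.ncard_image_of_injective _ (fun a b h => by injection h), ← numInternal_eq_ncard]

lemma numInternal_pos {t : PTree} (h : IsInternalAt t []) : 1 ≤ numInternal t := by
  rw [numInternal_eq_ncard]
  have := (Set.ncard_pos (finite_setOf_isInternalAt t)).2 ⟨[], h⟩
  omega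

lemma leavesBefore_shape_zero {c0 : PTree} {cs : List PTree} {p : List ℕ} :
    leavesBefore (node (c0 :: cs)) (0 :: p) = leavesBefore c0 p := by
  rw [leavesBefore_cons (by simp)]
  simp

lemma subtree!_shape_zero {c0 : PTree} {cs : List PTree} {p : List ℕ} :
    subtree! (node (c0 :: cs)) (0 :: p) = subtree! c0 p :=
  subtree!_cons (by simp)

lemma sectorIn_shape_zero {c0 : PTree} {cs : List PTree} {p : List ℕ} {i : ℕ} :
    SectorIn (node (c0 :: cs)) (0 :: p) i ↔ SectorIn c0 p i := by
  rw [SectorIn, SectorIn, leavesBefore_shape_zero, subtree!_shape_zero]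

lemma ownsSector_shape_zero {c0 : PTree} {cs : List PTree} (hcs : ∀ x ∈ cs, x = leaf)
    {p : List ℕ} {i : ℕ} :
    OwnsSector (node (c0 :: cs)) (0 :: p) i ↔ OwnsSector c0 p i := by
  constructor
  · rintro ⟨hint, hsec, hdeep⟩
    refine ⟨isInternalAt_shape_zero.1 hint, sectorIn_shape_zero.1 hsec, fun w hw hpre hne => ?_⟩
    have := hdeep (0 :: w) (isInternalAt_shape_zero.2 hw)
      (List.cons_prefix_cons.2 ⟨rfl, hpre⟩) (by simpa using hne)
    rw [sectorIn_shape_zero] at this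
    exact this
  · rintro ⟨hint, hsec, hdeep⟩
    refine ⟨isInternalAt_shape_zero.2 hint, sectorIn_shape_zero.2 hsec, fun w hw hpre hne => ?_⟩
    cases w with
    | nil => exact absurd hpre (by simp)
    | cons j w' =>
      cases j with
      | zero =>
        rw [List.cons_prefix_cons] at hpre
        rw [sectorIn_shape_zero]
        exact hdeep w' (isInternalAt_shape_zero.1 hw) hpre.2 (by simpa using hne)
      | succ j => exact absurd hw (isInternalAt_shape_succ hcs)

lemma ownsSector_lt {u : PTree} {p : List ℕ} {i : ℕ} (h : OwnsSector u p i) :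
    i + 2 ≤ numLeaves u := by
  obtain ⟨hint, hsec, -⟩ := h
  have hb := leavesBefore_add_numLeaves_le p u hint.isVertex
  have := hsec.2
  omega

lemma ownsSector_nil_shape {c0 : PTree} {cs : List PTree} (hcs : ∀ x ∈ cs, x = leaf)
    (hne : cs ≠ []) {i : ℕ} (hi : i + 2 ≤ numLeaves (node (c0 :: cs))) :
    OwnsSector (node (c0 :: cs)) [] i ↔ numLeaves c0 ≤ i + 1 := by
  constructor
  · rintro ⟨hint, hsec, hdeep⟩
    by_contra hk
    push_neg at hk
    have hc0 : IsInternalAt c0 [] := by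
      cases c0 with
      | node ds =>
        cases ds with
        | nil => rw [show node [] = leaf from rfl, numLeaves_leaf] at hk; omega
        | cons d ds' => exact isInternalAt_nil_iff.2 ⟨_, rfl, by simp⟩
    refine hdeep [0] (isInternalAt_shape_zero.2 hc0) (by simp) (by simp) ?_
    refine ⟨by simp [leavesBefore_shape_zero, leavesBefore_nil], ?_⟩
    rw [leavesBefore_shape_zero, leavesBefore_nil, subtree!_shape_zero, subtree!_nil]
    omega
  · intro hk
    refine ⟨isInternalAt_nil_iff.2 ⟨c0 :: cs, rfl, by simp⟩,
      ⟨by simp [leavesBefore_nil], by rw [leavesBefore_nil, subtree!_nil]; omega⟩,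
      fun w hw hpre hne' => ?_⟩
    cases w with
    | nil => exact absurd rfl hne'
    | cons j w' =>
      cases j with
      | zero =>
        rintro ⟨h1, h2⟩
        rw [leavesBefore_shape_zero] at h1
        rw [leavesBefore_shape_zero, subtree!_shape_zero] at h2
        have hb := leavesBefore_add_numLeaves_le w' c0
          (isInternalAt_shape_zero.1 hw).isVertex
        omega
      | succ j => exact absurd hw (isInternalAt_shape_succ hcs)

end PTree
end Part3
section Part4
namespace PTree

lemma filter_map_getD {α : Type*} (d : α) :
    ∀ (w : List α) (k : ℕ),
      ((List.range w.length).filter (fun i => decide (k ≤ i))).map (fun i => w.getD i d)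
        = w.drop k := by
  intro w
  induction w with
  | nil => intro k; simp
  | cons a w ih =>
    intro k
    rw [List.length_cons, List.range_succ_eq_map]
    simp only [List.filter_cons, List.filter_map]
    have hcong : (List.range w.length).filter ((fun i => decide (k ≤ i)) ∘ Nat.succ)
        = (List.range w.length).filter (fun i => decide (k - 1 ≤ i)) := by
      refine List.filter_congr fun i _ => ?_
      simp only [Function.comp_apply, decide_eq_decide]
      omega
    rw [hcong]
    have hmap : (List.map Nat.succ
          ((List.range w.length).filter (fun i => decide (k - 1 ≤ i)))).map
            (fun i => (a :: w).getD i d)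
        = ((List.range w.length).filter (fun i => decide (k - 1 ≤ i))).map
            (fun i => w.getD i d) := by
      rw [List.map_map]
      refine List.map_congr_left fun i _ => ?_
      simp [List.getD_cons_succ]
    cases k with
    | zero =>
      rw [if_pos (by simp), List.map_cons, hmap, ih 0]
      simp [List.getD_cons_zero]
    | succ k =>
      rw [if_neg (by simp), hmap]
      have : k + 1 - 1 = k := rfl
      rw [this, ih k, List.drop_succ_cons]

lemma filter_range_restrict {P : ℕ → Prop} [DecidablePred P] {k n : ℕ} (hkn : k ≤ n)
    (h : ∀ i, P i → i < k) :
    (List.range n).filter (fun i => decide (P i)) =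
      (List.range k).filter (fun i => decide (P i)) := by
  obtain ⟨m, rfl⟩ : ∃ m, n = k + m := ⟨n - k, by omega⟩
  rw [List.range_add, List.filter_append]
  have : (List.map (k + ·) (List.range m)).filter (fun i => decide (P i)) = [] := by
    rw [List.filter_eq_nil_iff]
    rintro a ha
    obtain ⟨i, -, rfl⟩ := List.mem_map.1 ha
    simp only [decide_eq_true_eq]
    intro hP
    exact absurd (h _ hP) (by omega)
  rw [this, List.append_nil]

lemma isCorolla_node_iff {cs : List PTree} :
    IsCorolla (node cs) ↔ 2 ≤ cs.length ∧ ∀ x ∈ cs, x = leaf := by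
  constructor
  · rintro ⟨m, hm, h⟩
    rw [corolla] at h
    obtain rfl : cs = List.replicate m leaf := by injection h
    exact ⟨by simpa using hm, fun x hx => List.eq_of_mem_replicate hx⟩
  · rintro ⟨hlen, hmem⟩
    exact ⟨cs.length, hlen, by rw [corolla, ← List.eq_replicate_of_mem hmem]⟩

lemma leaf_ne_node {ds : List PTree} (h : ds ≠ []) : leaf ≠ node ds := by
  intro heq; exact h (by injection heq.symm)

@[simp] lemma graftLeftmost_leaf (s : PTree) : graftLeftmost leaf s = s := rfl

lemma graftLeftmost_cons (c : PTree) (cs : List PTree) (s : PTree) :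
    graftLeftmost (node (c :: cs)) s = node (graftLeftmost c s :: cs) := rfl

lemma isBST_shape {u : PTree} (h : IsBST u) :
    u = leaf ∨ ∃ c0 cs, u = node (c0 :: cs) ∧ cs ≠ [] ∧ (∀ x ∈ cs, x = leaf) ∧ IsBST c0 := by
  induction h with
  | single => exact Or.inl rfl
  | graft t m ht hm ih =>
    rcases ih with rfl | ⟨c0, cs, rfl, hne, hcs, hc0⟩
    · right
      refine ⟨leaf, List.replicate (m - 1) leaf, ?_, ?_, fun x hx => List.eq_of_mem_replicate hx,
        IsBST.single⟩
      · conv_lhs => rw [show m = (m - 1) + 1 by omega]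
        rw [graftLeftmost_leaf, corolla, List.replicate_succ]
      · intro h0
        have := congrArg List.length h0
        simp at this
        omega
    · right
      rw [graftLeftmost_cons]
      exact ⟨graftLeftmost c0 (corolla m), cs, rfl, hne, hcs, IsBST.graft c0 m hc0 hm⟩

lemma isBST_shape_rev {c0 : PTree} {cs : List PTree} (hne : cs ≠ [])
    (hcs : ∀ x ∈ cs, x = leaf) (h : IsBST c0) : IsBST (node (c0 :: cs)) := by
  induction h with
  | single =>
    have heq : node (leaf :: cs) = graftLeftmost leaf (corolla (cs.length + 1)) := by
      rw [graftLeftmost_leaf, corolla, List.replicate_succ, ← List.eq_replicate_of_mem hcs]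
    rw [heq]
    refine IsBST.graft leaf (cs.length + 1) IsBST.single ?_
    have : cs.length ≠ 0 := fun h0 => hne (List.length_eq_zero_iff.1 h0)
    omega
  | graft c m hc hm ih =>
    rw [show node (graftLeftmost c (corolla m) :: cs) = graftLeftmost (node (c :: cs)) (corolla m)
      from rfl]
    exact IsBST.graft _ m ih hm

lemma isBST_corolla {m : ℕ} (hm : 2 ≤ m) : IsBST (corolla m) := by
  have := IsBST.graft leaf m IsBST.single hm
  rwa [graftLeftmost_leaf] at this

lemma charD_nil {A : Type*} [Ring A] (φ : A → ℂ) : charD φ [] = 1 := by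
  simp [charD]

open Classical in
lemma charD_single {A : Type*} [Ring A] (φ : A → ℂ) (d : PTree × List A) :
    charD φ [d] = if IsCorolla d.1 then φ d.2.prod else 0 := by
  simp [charD]

lemma epsD_cons {A : Type*} (d : PTree × List A) (F : DForest A) :
    epsD (d :: F) = 0 := by
  simp [epsD]

end PTree
end Part4
section Part5
namespace PTree

open Classical in
lemma phiPi_leaf {A : Type*} [Ring A] (φ : A → ℂ) (w : List A) : phiPi φ leaf w = 1 := by
  rw [phiPi]
  have h : {v : List ℕ | IsInternalAt leaf v} = ∅ := by
    ext v; simp [not_isInternalAt_leaf]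
  rw [h, finprod_mem_empty]

lemma getD_take_eq {α : Type*} (d : α) (w : List α) {i k : ℕ} (h : i < k) :
    (w.take k).getD i d = w.getD i d := by
  simp [List.getD_eq_getElem?_getD, List.getElem?_take, h]

open Classical in
lemma phiPi_shape {A : Type*} [Ring A] (φ : A → ℂ) {c0 : PTree} {cs : List PTree}
    (hcs : ∀ x ∈ cs, x = leaf) (hne : cs ≠ []) (w : List A)
    (hw : w.length = (numLeaves c0 - 1) + cs.length) :
    phiPi φ (node (c0 :: cs)) w =
      φ ((w.drop (numLeaves c0 - 1)).prod) * phiPi φ c0 (w.take (numLeaves c0 - 1)) := by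
  set k := numLeaves c0 - 1 with hk
  have hpos := numLeaves_pos c0
  have hrpos : 1 ≤ cs.length := List.length_pos_iff.2 hne
  have hkn : k ≤ w.length := by omega
  have htk : (w.take k).length = k := by rw [List.length_take]; omega
  have hnt : numLeaves (node (c0 :: cs)) = numLeaves c0 + cs.length := numLeaves_shape hcs
  set F0 : Finset (List ℕ) := (finite_setOf_isInternalAt c0).toFinset with hF0
  have hF0mem : ∀ p, p ∈ F0 ↔ IsInternalAt c0 p := fun p => Set.Finite.mem_toFinset _
  set f : List ℕ → ℂ := fun v =>
    φ ((((List.range w.length).filter fun i => OwnsSector (node (c0 :: cs)) v i).map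
      fun i => w.getD i 0).prod) with hfdef
  have hFset : (↑(insert ([] : List ℕ) (F0.image (fun p => 0 :: p))) : Set (List ℕ))
      = {v | IsInternalAt (node (c0 :: cs)) v} := by
    rw [Finset.coe_insert, Finset.coe_image, Set.Finite.coe_toFinset,
      internalSet_shape hcs hne]
  have h1 : phiPi φ (node (c0 :: cs)) w
      = ∏ v ∈ insert ([] : List ℕ) (F0.image (fun p => 0 :: p)), f v := by
    rw [phiPi, ← hFset, finprod_mem_coe_finset]
  have hnotmem : ([] : List ℕ) ∉ F0.image (fun p => 0 :: p) := by
    rw [Finset.mem_image]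
    rintro ⟨p, -, h⟩
    exact absurd h (by simp)
  rw [h1, Finset.prod_insert hnotmem]
  congr 1
  · -- root factor
    show φ _ = φ _
    congr 1
    have hroot : ((List.range w.length).filter fun i => OwnsSector (node (c0 :: cs)) [] i)
        = (List.range w.length).filter (fun i => decide (k ≤ i)) := by
      refine List.filter_congr fun i hi => ?_
      rw [List.mem_range] at hi
      rw [decide_eq_decide, ownsSector_nil_shape hcs hne (by omega)]
      omega
    rw [hroot, filter_map_getD]
  · -- children factors
    rw [Finset.prod_image (fun p _ q _ h => by injection h)]
    rw [phiPi, ← Set.Finite.coe_toFinset (finite_setOf_isInternalAt c0),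
      finprod_mem_coe_finset]
    refine Finset.prod_congr rfl fun p hp => ?_
    have hpint : IsInternalAt c0 p := (hF0mem p).1 hp
    show φ _ = φ _
    congr 1
    have hstep1 : ((List.range w.length).filter fun i => OwnsSector (node (c0 :: cs)) (0 :: p) i)
        = (List.range w.length).filter (fun i => decide (OwnsSector c0 p i)) := by
      refine List.filter_congr fun i _ => ?_
      rw [decide_eq_decide]
      exact ownsSector_shape_zero hcs
    have hlt : ∀ i, OwnsSector c0 p i → i < k := by
      intro i hoi
      have := ownsSector_lt hoi
      omega
    rw [hstep1, filter_range_restrict hkn hlt]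
    have hstep3 : ((List.range k).filter fun i => decide (OwnsSector c0 p i)).map
          (fun i => w.getD i 0)
        = ((List.range k).filter fun i => decide (OwnsSector c0 p i)).map
          (fun i => (w.take k).getD i 0) := by
      refine List.map_congr_left fun i hi => ?_
      have : i < k := List.mem_range.1 (List.mem_of_mem_filter hi)
      rw [getD_take_eq _ _ this]
    rw [hstep3, htk]

lemma mem_internalFinset {t : PTree} {v : List ℕ} :
    v ∈ internalFinset t ↔ IsInternalAt t v := by
  classical
  rw [internalFinset, List.mem_toFinset, List.mem_filter]
  constructor
  · rintro ⟨-, h⟩; exact of_decide_eq_true h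
  · exact fun h => ⟨mem_verticesList_of_isVertex h.isVertex, decide_eq_true h⟩

lemma mem_cutsFinset {t : PTree} {c : Finset (List ℕ)} :
    c ∈ cutsFinset t ↔ (∀ v ∈ c, IsInternalAt t v) ∧
      ∀ v ∈ c, ∀ u ∈ c, v ≠ u → ¬ v <+: u := by
  classical
  rw [cutsFinset, Finset.mem_filter, Finset.mem_powerset]
  constructor
  · rintro ⟨hsub, h⟩
    exact ⟨fun v hv => mem_internalFinset.1 (hsub hv), h⟩
  · rintro ⟨h1, h2⟩
    exact ⟨fun v hv => mem_internalFinset.2 (h1 v hv), h2⟩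

lemma mem_cutsSuccFinset {t : PTree} {c : Finset (List ℕ)} :
    c ∈ cutsSuccFinset t ↔ c ∈ cutsFinset t ∧ ∃ v ∈ c, OnLeftBranch v := by
  classical
  rw [cutsSuccFinset, Finset.mem_filter]

lemma onLeftBranch_nil : OnLeftBranch [] := rfl

lemma onLeftBranch_zero : OnLeftBranch [0] := rfl

lemma onLeftBranch_cases {v : List ℕ} (h : OnLeftBranch v) (h1 : v ≠ []) (h2 : v ≠ [0]) :
    ∃ v', v = 0 :: 0 :: v' := by
  rw [OnLeftBranch] at h
  cases v with
  | nil => exact absurd rfl h1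
  | cons a v' =>
    rw [List.length_cons, List.replicate_succ, List.cons.injEq] at h
    obtain ⟨rfl, hv'⟩ := h
    cases v' with
    | nil => exact absurd rfl h2
    | cons b v'' =>
      rw [List.length_cons, List.replicate_succ, List.cons.injEq] at hv'
      exact ⟨v'', by rw [hv'.1]⟩

lemma sortCut_singleton (t : PTree) (v : List ℕ) : sortCut t {v} = [v] := by
  rw [sortCut, Finset.toList_singleton]
  exact List.perm_singleton.1 (List.mergeSort_perm _ _)

@[simp] lemma replaceLeaf_nil (t : PTree) : replaceLeaf [] t = leaf := rfl

lemma replaceLeaf_cons (i : ℕ) (p : List ℕ) (cs : List PTree) :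
    replaceLeaf (i :: p) (node cs) = node (cs.set i (replaceLeaf p (cs.getD i leaf))) := rfl

lemma trunkTree_singleton (t : PTree) (v : List ℕ) :
    trunkTree t {v} = replaceLeaf v t := by
  rw [trunkTree, sortCut_singleton]
  rfl

lemma prunePart_singleton {A : Type*} (t : PTree) (w : List A) (v : List ℕ) :
    prunePart (t, w) {v} =
      [(subtree! t v, (w.drop (leavesBefore t v)).take (numSectors (subtree! t v)))] := by
  rw [prunePart, sortCut_singleton]
  rfl

lemma prunePart_length {A : Type*} (d : PTree × List A) (c : Finset (List ℕ)) :
    (prunePart d c).length = c.card := by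
  rw [prunePart, List.length_map, sortCut, List.length_mergeSort, Finset.length_toList]

lemma beta_prunePart_zero {A : Type*} {β : DForest A → ℂ} (hβ : IsInfCharD β)
    {d : PTree × List A} {c : Finset (List ℕ)} (h2 : 2 ≤ c.card) :
    β (prunePart d c) = 0 := by
  have hl : 2 ≤ (prunePart d c).length := by rw [prunePart_length]; exact h2
  cases hp : prunePart d c with
  | nil => rw [hp] at hl; simp at hl
  | cons x L =>
    cases L with
    | nil => rw [hp] at hl; simp at hl
    | cons y l =>
      have := hβ.2 [x] (y :: l) (by simp) (by simp)
      simpa using this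

lemma flatMap_map_singleton {α β : Type*} (l : List α) (h : α → β) :
    (l.flatMap fun c => [h c]) = l.map h := by
  induction l with
  | nil => rfl
  | cons a l ih => simp [List.flatMap_cons, ih]

lemma succD_single {A : Type*} [Zero A] (f g : DForest A → ℂ) (t : PTree) (w : List A) :
    succD f g [(t, w)] =
      ∑ c ∈ cutsSuccFinset t, f (trunkPart (t, w) c) * g (prunePart (t, w) c) := by
  rw [succD]
  show ((forestSplitsSucc [(t, w)]).map fun pr => f pr.1 * g pr.2).sum = _
  rw [forestSplitsSucc]
  have h1 : forestSplits ([] : DForest A) = [([], [])] := rfl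
  simp only [h1, List.map_cons, List.map_nil, List.append_nil]
  rw [flatMap_map_singleton, List.map_map]
  exact Finset.sum_map_toList _ _

end PTree
end Part5
section Part6
namespace PTree

lemma numInternal_leaf : numInternal leaf = 0 := by
  rw [numInternal_eq_ncard]
  have h : {p | IsInternalAt leaf p} = ∅ := by
    ext p; simp [not_isInternalAt_leaf]
  rw [h, Set.ncard_empty]

lemma two_le_numLeaves {ds : List PTree} (h2 : 2 ≤ ds.length) : 2 ≤ numLeaves (node ds) := by
  rw [numLeaves_node (by intro h; rw [h] at h2; simp at h2)]
  calc 2 ≤ ds.length := h2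
  _ = (Finset.range ds.length).card • 1 := by simp
  _ ≤ ∑ i ∈ Finset.range ds.length, numLeaves (ds.getD i leaf) :=
      Finset.card_nsmul_le_sum _ _ _ (fun i _ => numLeaves_pos _)

lemma trunkPart_rootCut {A : Type*} [Zero A] (t : PTree) (w : List A) :
    trunkPart (t, w) {([] : List ℕ)} = [] := by
  simp only [trunkPart, trunkTree_singleton, replaceLeaf_nil, if_pos]

lemma prunePart_rootCut {A : Type*} (t : PTree) (w : List A)
    (hnw : numSectors t = w.length) :
    prunePart (t, w) {([] : List ℕ)} = [(t, w)] := by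
  rw [prunePart_singleton]
  simp [subtree!_nil, leavesBefore_nil, hnw]

lemma trunkTree_zeroCut (c0 : PTree) (cs : List PTree) :
    trunkTree (node (c0 :: cs)) {[0]} = node (leaf :: cs) := by
  rw [trunkTree_singleton, replaceLeaf_cons]
  simp

lemma trunkPart_zeroCut {A : Type*} [Zero A] {c0 : PTree} {cs : List PTree}
    (hne : cs ≠ []) (w : List A) :
    trunkPart (node (c0 :: cs), w) {[0]} =
      [(node (leaf :: cs), trunkWord (node (c0 :: cs)) {[0]} w)] := by
  have hnleaf : node (leaf :: cs) ≠ leaf := by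
    intro h; injection h with h'; exact List.cons_ne_nil _ _ h'
  simp only [trunkPart]
  rw [trunkTree_zeroCut, if_neg hnleaf]

lemma removedIdx_zeroCut {c0 : PTree} {cs : List PTree} {i : ℕ} :
    RemovedIdx (node (c0 :: cs)) {[0]} i ↔ i < numLeaves c0 - 1 := by
  rw [RemovedIdx]
  constructor
  · rintro ⟨v, hv, h1, h2⟩
    rw [Finset.mem_singleton] at hv
    subst hv
    rw [show (0 :: ([] : List ℕ)) = 0 :: ([] : List ℕ) from rfl] at h1 h2
    rw [leavesBefore_shape_zero, leavesBefore_nil] at h1 h2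
    rw [subtree!_shape_zero, subtree!_nil] at h2
    rw [numSectors] at h2
    omega
  · intro h
    refine ⟨[0], Finset.mem_singleton_self _, ?_, ?_⟩
    · rw [show ([0] : List ℕ) = 0 :: ([] : List ℕ) from rfl, leavesBefore_shape_zero,
        leavesBefore_nil]
      omega
    · rw [show ([0] : List ℕ) = 0 :: ([] : List ℕ) from rfl, leavesBefore_shape_zero,
        leavesBefore_nil, subtree!_shape_zero, subtree!_nil, numSectors]
      omega

open Classical in
lemma trunkWord_zeroCut {A : Type*} [Zero A] {c0 : PTree} {cs : List PTree} (w : List A) :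
    trunkWord (node (c0 :: cs)) {[0]} w = w.drop (numLeaves c0 - 1) := by
  rw [trunkWord]
  have hcong : (List.range w.length).filter
        (fun i => decide (¬ RemovedIdx (node (c0 :: cs)) {[0]} i))
      = (List.range w.length).filter (fun i => decide (numLeaves c0 - 1 ≤ i)) := by
    refine List.filter_congr fun i _ => ?_
    rw [decide_eq_decide, removedIdx_zeroCut]
    omega
  rw [hcong, filter_map_getD]

lemma prunePart_zeroCut {A : Type*} {c0 : PTree} {cs : List PTree} (w : List A) :
    prunePart (node (c0 :: cs), w) {[0]} = [(c0, w.take (numLeaves c0 - 1))] := by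
  rw [prunePart_singleton]
  rw [show ([0] : List ℕ) = 0 :: ([] : List ℕ) from rfl, leavesBefore_shape_zero,
    leavesBefore_nil, subtree!_shape_zero, subtree!_nil, numSectors]
  simp

open Classical in
lemma charD_trunkPart_deep {A : Type*} [Ring A] (φ : A → ℂ) {c0 : PTree} {cs : List PTree}
    {v' : List ℕ} (hint : IsInternalAt (node (c0 :: cs)) (0 :: 0 :: v')) (w : List A) :
    charD φ (trunkPart (node (c0 :: cs), w) (({0 :: 0 :: v'} : Finset (List ℕ)))) = 0 := by
  obtain ⟨c, hc, hcint⟩ := isInternalAt_cons_iff.1 hint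
  obtain rfl : c0 = c := by simpa using hc
  cases c0 with
  | node ds =>
    have hds : ds ≠ [] := by
      obtain ⟨d, hd, -⟩ := isInternalAt_cons_iff.1 hcint
      intro h; rw [h] at hd; simp at hd
    have htr : trunkTree (node (node ds :: cs)) {0 :: 0 :: v'}
        = node (node (ds.set 0 (replaceLeaf v' (ds.getD 0 leaf))) :: cs) := by
      rw [trunkTree_singleton, replaceLeaf_cons]
      simp [replaceLeaf_cons]
    have hsetne : ds.set 0 (replaceLeaf v' (ds.getD 0 leaf)) ≠ [] := by
      intro h
      have := congrArg List.length h
      rw [List.length_set] at this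
      exact hds (List.length_eq_zero_iff.1 this)
    have hnl : node (node (ds.set 0 (replaceLeaf v' (ds.getD 0 leaf))) :: cs) ≠ leaf := by
      intro h; injection h with h'; exact List.cons_ne_nil _ _ h'
    have hnc : ¬ IsCorolla (node (node (ds.set 0 (replaceLeaf v' (ds.getD 0 leaf))) :: cs)) := by
      intro h
      obtain ⟨-, hmem⟩ := isCorolla_node_iff.1 h
      have := hmem (node (ds.set 0 (replaceLeaf v' (ds.getD 0 leaf)))) List.mem_cons_self
      exact hsetne (by injection this)
    simp only [trunkPart]
    rw [htr, if_neg hnl, charD_single, if_neg hnc]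

end PTree
end Part6
section Part7
namespace PTree

lemma eq_leaf_of_not_internal {c0 : PTree} (h : ¬ IsInternalAt c0 []) : c0 = leaf := by
  cases c0 with
  | node es =>
    cases es with
    | nil => rfl
    | cons e es' => exact absurd (isInternalAt_nil_iff.2 ⟨_, rfl, by simp⟩) h

open Classical in
lemma main_formula {A : Type*} [Ring A] (φ : A → ℂ) (β : DForest A → ℂ)
    (hβ : IsInfCharD β)
    (hfix : ∀ F : DForest A, GoodForest F → charD φ F = epsD F + succD (charD φ) β F) :
    ∀ n : ℕ, 1 ≤ n → ∀ t, t ∈ ST n → ∀ w : List A, w.length = n →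
      β [(t, w)] = if IsBST t then (-1 : ℂ) ^ (numInternal t - 1) * phiPi φ t w else 0 := by
  intro n
  induction n using Nat.strong_induction_on with
  | _ n ih =>
  intro hn t ht w hw
  obtain ⟨hsch, hnl⟩ := ht
  cases hsch with
  | leaf =>
    have h1 : numLeaves (node []) = 1 := numLeaves_leaf
    omega
  | node cs0 hlen0 hall0 =>
  cases cs0 with
  | nil => simp at hlen0
  | cons c0 cs =>
  have hne : cs ≠ [] := by
    intro h; rw [h] at hlen0; simp at hlen0
  have hschroder : IsSchroder (node (c0 :: cs)) := IsSchroder.node _ hlen0 hall0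
  have hnsec : numSectors (node (c0 :: cs)) = w.length := by
    rw [numSectors, hnl, hw]
    omega
  have hgood : GoodForest [(node (c0 :: cs), w)] := by
    intro d hd
    rw [List.mem_singleton] at hd
    subst hd
    refine ⟨hschroder, ?_, hnsec.symm⟩
    intro h; injection h with h'; exact List.cons_ne_nil _ _ h'
  have heq := hfix [(node (c0 :: cs), w)] hgood
  rw [epsD_cons, zero_add, succD_single] at heq
  have hrootcut : ({([] : List ℕ)} : Finset (List ℕ)) ∈ cutsSuccFinset (node (c0 :: cs)) := by
    refine mem_cutsSuccFinset.2 ⟨mem_cutsFinset.2 ⟨?_, ?_⟩,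
      ⟨[], Finset.mem_singleton_self _, onLeftBranch_nil⟩⟩
    · intro v hv
      rw [Finset.mem_singleton] at hv; subst hv
      exact isInternalAt_nil_iff.2 ⟨_, rfl, List.cons_ne_nil _ _⟩
    · intro v hv u hu hvu
      rw [Finset.mem_singleton] at hv hu
      subst hv; subst hu
      exact absurd rfl hvu
  have hroot_term : charD φ (trunkPart (node (c0 :: cs), w) {([] : List ℕ)}) *
      β (prunePart (node (c0 :: cs), w) {([] : List ℕ)}) = β [(node (c0 :: cs), w)] := by
    rw [trunkPart_rootCut, charD_nil, prunePart_rootCut _ _ hnsec, one_mul]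
  have hvanish : ∀ c ∈ cutsSuccFinset (node (c0 :: cs)), c ≠ {([] : List ℕ)} → c ≠ {[0]} →
      charD φ (trunkPart (node (c0 :: cs), w) c) * β (prunePart (node (c0 :: cs), w) c) = 0 := by
    intro c hc h1 h2
    obtain ⟨hcut, v0, hv0, hbr⟩ := mem_cutsSuccFinset.1 hc
    rcases Nat.lt_or_ge c.card 2 with hlt | hge
    · have hcard : c.card = 1 := by
        have : 0 < c.card := Finset.card_pos.2 ⟨v0, hv0⟩
        omega
      obtain ⟨v, rfl⟩ := Finset.card_eq_one.1 hcard
      obtain rfl : v0 = v := Finset.mem_singleton.1 hv0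
      have hv1 : v0 ≠ [] := fun h => h1 (by rw [h])
      have hv2 : v0 ≠ [0] := fun h => h2 (by rw [h])
      obtain ⟨v', rfl⟩ := onLeftBranch_cases hbr hv1 hv2
      have hint : IsInternalAt (node (c0 :: cs)) (0 :: 0 :: v') :=
        (mem_cutsFinset.1 hcut).1 _ (Finset.mem_singleton_self _)
      rw [charD_trunkPart_deep φ hint w, zero_mul]
    · rw [beta_prunePart_zero hβ hge, mul_zero]
  by_cases hAll : ∀ x ∈ cs, x = leaf
  · -- Case A : all non-first children are leaves
    have hnlc : numLeaves (node (c0 :: cs)) = numLeaves c0 + cs.length := numLeaves_shape hAll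
    have hpos := numLeaves_pos c0
    have hrpos : 1 ≤ cs.length := List.length_pos_iff.2 hne
    have harith : (numLeaves c0 - 1) + cs.length = n := by omega
    by_cases hc0 : IsInternalAt c0 []
    · -- Case A2 : first child is internal
      obtain ⟨ds, rfl, hds⟩ := isInternalAt_nil_iff.1 hc0
      have h2le : 2 ≤ numLeaves (node ds) := by
        cases hall0 (node ds) List.mem_cons_self with
        | leaf => exact absurd rfl hds
        | node _ hlen2 _ => exact two_le_numLeaves hlen2
      have hzero_int : IsInternalAt (node (node ds :: cs)) [0] :=
        isInternalAt_cons_iff.2 ⟨node ds, by simp, hc0⟩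
      have hzerocut : ({[0]} : Finset (List ℕ)) ∈ cutsSuccFinset (node (node ds :: cs)) := by
        refine mem_cutsSuccFinset.2 ⟨mem_cutsFinset.2 ⟨?_, ?_⟩,
          ⟨[0], Finset.mem_singleton_self _, onLeftBranch_zero⟩⟩
        · intro v hv
          rw [Finset.mem_singleton] at hv; subst hv
          exact hzero_int
        · intro v hv u hu hvu
          rw [Finset.mem_singleton] at hv hu
          subst hv; subst hu
          exact absurd rfl hvu
      have hpairne : ({([] : List ℕ)} : Finset (List ℕ)) ≠ {[0]} := by
        intro h
        have := Finset.singleton_injective h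
        simp at this
      have hsub : ({{([] : List ℕ)}, {[0]}} : Finset (Finset (List ℕ)))
          ⊆ cutsSuccFinset (node (node ds :: cs)) := by
        intro c hc
        rcases Finset.mem_insert.1 hc with rfl | hc
        · exact hrootcut
        · rw [Finset.mem_singleton] at hc; subst hc; exact hzerocut
      have hz : ∀ x ∈ cutsSuccFinset (node (node ds :: cs)),
          x ∉ ({{([] : List ℕ)}, {[0]}} : Finset (Finset (List ℕ))) →
          charD φ (trunkPart (node (node ds :: cs), w) x) *
            β (prunePart (node (node ds :: cs), w) x) = 0 := by
        intro x hx hnx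
        simp only [Finset.mem_insert, Finset.mem_singleton] at hnx
        push_neg at hnx
        exact hvanish x hx hnx.1 hnx.2
      have hnotcor : ¬ IsCorolla (node (node ds :: cs)) := by
        intro h
        have := (isCorolla_node_iff.1 h).2 (node ds) List.mem_cons_self
        exact hds (by injection this)
      have hcor2 : IsCorolla (node (leaf :: cs)) := by
        refine isCorolla_node_iff.2 ⟨by simp; omega, ?_⟩
        intro x hx
        rcases List.mem_cons.1 hx with rfl | hx
        · rfl
        · exact hAll x hx
      have hterm0 : charD φ (trunkPart (node (node ds :: cs), w) {[0]}) *
          β (prunePart (node (node ds :: cs), w) {[0]})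
          = φ ((w.drop (numLeaves (node ds) - 1)).prod) *
            β [(node ds, w.take (numLeaves (node ds) - 1))] := by
        rw [trunkPart_zeroCut hne w, charD_single, if_pos hcor2, trunkWord_zeroCut w,
          prunePart_zeroCut w]
      have hkey : (0 : ℂ) = β [(node (node ds :: cs), w)] +
          φ ((w.drop (numLeaves (node ds) - 1)).prod) *
            β [(node ds, w.take (numLeaves (node ds) - 1))] := by
        calc (0 : ℂ) = charD φ [(node (node ds :: cs), w)] := by
              rw [charD_single, if_neg hnotcor]
        _ = ∑ c ∈ cutsSuccFinset (node (node ds :: cs)),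
              charD φ (trunkPart (node (node ds :: cs), w) c) *
                β (prunePart (node (node ds :: cs), w) c) := heq
        _ = ∑ c ∈ ({{([] : List ℕ)}, {[0]}} : Finset (Finset (List ℕ))),
              charD φ (trunkPart (node (node ds :: cs), w) c) *
                β (prunePart (node (node ds :: cs), w) c) := (Finset.sum_subset hsub hz).symm
        _ = _ := by rw [Finset.sum_pair hpairne, hroot_term, hterm0]
      have hk1 : 1 ≤ numLeaves (node ds) - 1 := by omega
      have hklt : numLeaves (node ds) - 1 < n := by omega
      have hst : node ds ∈ ST (numLeaves (node ds) - 1) :=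
        ⟨hall0 _ List.mem_cons_self, by omega⟩
      have hlentake : (w.take (numLeaves (node ds) - 1)).length = numLeaves (node ds) - 1 := by
        rw [List.length_take]; omega
      have hIH := ih _ hklt hk1 (node ds) hst _ hlentake
      have hphi := phiPi_shape (c0 := node ds) φ hAll hne w (by omega)
      have hni := numInternal_shape (c0 := node ds) hAll hne
      have hi0 : 1 ≤ numInternal (node ds) := numInternal_pos hc0
      by_cases hbst : IsBST (node ds)
      · rw [if_pos (isBST_shape_rev hne hAll hbst)]
        rw [hIH, if_pos hbst] at hkey
        rw [hni, hphi]
        rw [show numInternal (node ds) + 1 - 1 = (numInternal (node ds) - 1) + 1 by omega,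
          pow_succ]
        linear_combination -hkey
      · have hnbst : ¬ IsBST (node (node ds :: cs)) := by
          intro h
          rcases isBST_shape h with h' | ⟨c0', cs', h', -, -, hbst'⟩
          · injection h' with h''; exact List.cons_ne_nil _ _ h''
          · injection h' with h''
            injection h'' with hA hB
            exact hbst (hA ▸ hbst')
        rw [if_neg hnbst]
        rw [hIH, if_neg hbst] at hkey
        linear_combination -hkey
    · -- Case A1 : first child is a leaf, so the tree is a corolla
      have hc0leaf : c0 = leaf := eq_leaf_of_not_internal hc0
      subst hc0leaf
      have hcor : IsCorolla (node (leaf :: cs)) := by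
        refine isCorolla_node_iff.2 ⟨hlen0, ?_⟩
        intro x hx
        rcases List.mem_cons.1 hx with rfl | hx
        · rfl
        · exact hAll x hx
      have hvanishA : ∀ c ∈ cutsSuccFinset (node (leaf :: cs)), c ≠ {([] : List ℕ)} →
          charD φ (trunkPart (node (leaf :: cs), w) c) *
            β (prunePart (node (leaf :: cs), w) c) = 0 := by
        intro c hc h1
        by_cases h2 : c = {[0]}
        · subst h2
          have hint : IsInternalAt (node (leaf :: cs)) [0] :=
            (mem_cutsFinset.1 (mem_cutsSuccFinset.1 hc).1).1 _ (Finset.mem_singleton_self _)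
          obtain ⟨c', hc', hcint⟩ := isInternalAt_cons_iff.1 hint
          obtain rfl : leaf = c' := by simpa using hc'
          exact absurd hcint (not_isInternalAt_leaf _)
        · exact hvanish c hc h1 h2
      have hkey : charD φ [(node (leaf :: cs), w)] = β [(node (leaf :: cs), w)] := by
        rw [heq, Finset.sum_eq_single_of_mem _ hrootcut
          (fun b hb hbne => hvanishA b hb hbne), hroot_term]
      have hbst : IsBST (node (leaf :: cs)) := isBST_shape_rev hne hAll IsBST.single
      rw [if_pos hbst]
      have hphi := phiPi_shape (c0 := leaf) φ hAll hne w
        (by have h1 : numLeaves leaf = 1 := numLeaves_leaf; omega)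
      rw [numLeaves_leaf] at hphi
      have hni := numInternal_shape (c0 := leaf) hAll hne
      rw [numInternal_leaf] at hni
      rw [hni, hphi, phiPi_leaf, mul_one]
      rw [show 0 + 1 - 1 = 0 from rfl, pow_zero, one_mul]
      rw [← hkey, charD_single, if_pos hcor]
      simp [List.drop_zero]
  · -- Case B : some non-first child is not a leaf
    push_neg at hAll
    obtain ⟨x, hx, hxl⟩ := hAll
    have hnotcor : ¬ IsCorolla (node (c0 :: cs)) := by
      intro h
      exact hxl ((isCorolla_node_iff.1 h).2 x (List.mem_cons_of_mem _ hx))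
    have hvanishB : ∀ c ∈ cutsSuccFinset (node (c0 :: cs)), c ≠ {([] : List ℕ)} →
        charD φ (trunkPart (node (c0 :: cs), w) c) *
          β (prunePart (node (c0 :: cs), w) c) = 0 := by
      intro c hc h1
      by_cases h2 : c = {[0]}
      · subst h2
        have hnc : ¬ IsCorolla (node (leaf :: cs)) := by
          intro h
          exact hxl ((isCorolla_node_iff.1 h).2 x (List.mem_cons_of_mem _ hx))
        rw [trunkPart_zeroCut hne w, charD_single, if_neg hnc, zero_mul]
      · exact hvanish c hc h1 h2
    have hkey : charD φ [(node (c0 :: cs), w)] = β [(node (c0 :: cs), w)] := by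
      rw [heq, Finset.sum_eq_single_of_mem _ hrootcut
        (fun b hb hbne => hvanishB b hb hbne), hroot_term]
    have hnbst : ¬ IsBST (node (c0 :: cs)) := by
      intro h
      rcases isBST_shape h with h' | ⟨c0', cs', h', -, hcs', -⟩
      · injection h' with h''; exact List.cons_ne_nil _ _ h''
      · injection h' with h''
        injection h'' with hA hB
        exact hxl (hcs' x (hB ▸ hx))
    rw [if_neg hnbst, ← hkey, charD_single, if_neg hnotcor]

end PTree
end Part7
/-- Let `(A, φ)` be a noncommutative probability space, `Φ̃ : H_S(A) → ℂ`
the character extending `φ`, and `β̃` the infinitesimal character satisfying the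
fixed-point equation `Φ̃ = ε_A + Φ̃ ≻̃ β̃`. Then for every `n ≥ 1`, `t ∈ ST(n)` and
`a_1, …, a_n ∈ A`: `β̃(t ⊗ a_1⋯a_n) = (−1)^{i(t)−1} φ_{π(t)}(a_1,…,a_n)` if `t ∈ BST(n)`,
and `β̃(t ⊗ a_1⋯a_n) = 0` otherwise. -/
theorem booleanInfinitesimalCharacter_on_decorated_schroder_trees
    (A : Type*) [Ring A] [Algebra ℂ A] (φ : A →ₗ[ℂ] ℂ) (hφ : φ 1 = 1)
    (β : PTree.DForest A → ℂ) (hβ : PTree.IsInfCharD β)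
    (hfix : ∀ F : PTree.DForest A, PTree.GoodForest F →
      PTree.charD (fun x => φ x) F =
        PTree.epsD F + PTree.succD (PTree.charD (fun x => φ x)) β F)
    (n : ℕ) (hn : 1 ≤ n) (t : PTree) (ht : t ∈ PTree.ST n)
    (w : List A) (hw : w.length = n) :
    (PTree.IsBST t →
      β [(t, w)] =
        (-1 : ℂ) ^ (PTree.numInternal t - 1) * PTree.phiPi (fun x => φ x) t w) ∧
    (¬ PTree.IsBST t → β [(t, w)] = 0) := by
  have h := PTree.main_formula (fun x => φ x) β hβ hfix n hn t ht w hw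
  constructor
  · intro hbst; rwa [if_pos hbst] at h
  · intro hnbst; rwa [if_neg hnbst] at h
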